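/- arXiv:1304.3412 — 2 statements merged into one kernel-verified Lean document; each statement's English description precedes it below -/
import Mathlib

section
/- Let C be an n-cycle in S_n and m a positive integer, d = gcd(m,n), n_0 = n/d. Then for any partition μ of n, the character value Tr_{π_μ}(C^m) equals Σ_{|λ|=d} (dim π_λ) · c_{λ,n_0}^μ, where c_{λ,n_0}^μ are defined by Ψ_{n_0}(s_λ) = Σ_μ c_{λ,n_0}^μ s_μ. -/
open MvPolynomial

/-- The ring of symmetric functions in infinitely many variables (with complex
coefficients), modeled as the polynomial ring on the power sums `p k`, `k ≥ 1`. -/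
abbrev SymmFnC : Type := MvPolynomial ℕ+ ℂ

/-- The power sum `p k`, for a natural number index `k ≥ 1` (junk value `1` at `k = 0`). -/
noncomputable def psymNC (k : ℕ) : SymmFnC := if h : 0 < k then X (⟨k, h⟩ : ℕ+) else 1

/-- Evaluation of a symmetric function as a symmetric polynomial in `N` variables. -/
noncomputable def pEvalC (N : ℕ) : SymmFnC →ₐ[ℂ] MvPolynomial (Fin N) ℂ :=
  aeval fun k : ℕ+ => ∑ r : Fin N, X r ^ (k : ℕ)

/-- The alternant `a_μ = det (x_r^{μ_c + (N-1-c)})`. -/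
noncomputable def alternantC (N : ℕ) (μ : ℕ → ℕ) : MvPolynomial (Fin N) ℂ :=
  Matrix.det (Matrix.of fun r c : Fin N =>
    (X r : MvPolynomial (Fin N) ℂ) ^ (μ (c : ℕ) + (N - 1 - (c : ℕ))))

/-- `s` is the family of Schur functions (indexed by weakly decreasing finitely
supported functions `ℕ → ℕ`) iff it satisfies the bialternant formula in every
sufficiently large number of variables. -/
def IsSchurFamilyC (s : (ℕ → ℕ) → SymmFnC) : Prop :=
  ∀ (μ : ℕ → ℕ) (N : ℕ), Antitone μ → (∀ j, N ≤ j → μ j = 0) →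
    pEvalC N (s μ) * alternantC N (fun _ => 0) = alternantC N μ

/-- The parts of a partition of `d`, in weakly decreasing order (0-indexed, `0` beyond
the number of parts). -/
def partsOf {d : ℕ} (lam : d.Partition) : ℕ → ℕ :=
  fun j => (lam.parts.sort (· ≥ ·)).getD j 0

/-- The power sum `p_ρ(σ)` attached to the cycle type of a permutation `σ ∈ S_d`
(including the fixed points as cycles of length 1). -/
noncomputable def cycleTypePoly (d : ℕ) (σ : Equiv.Perm (Fin d)) : SymmFnC :=
  psymNC 1 ^ (d - σ.cycleType.sum) * (σ.cycleType.map psymNC).prod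

/-- The Adams operation `Ψ_m`, determined by `Ψ_m(p_k) = p_{mk}`. -/
noncomputable def adamsC (m : ℕ+) : SymmFnC →ₐ[ℂ] SymmFnC :=
  aeval fun k : ℕ+ => X (m * k)

/-!
By the Frobenius formula, the character values at `C ^ m` are the Schur coordinates of the
power sum `p_ρ`, where `ρ` is the cycle type of `C ^ m`. Every cycle of `C ^ m` has length
`orderOf (C ^ m) = n₀`, so `p_ρ = p_{n₀}^d = Ψ_{n₀}(p_1^d)`; applying `Ψ_{n₀}` to
`p_1^d = Σ_λ (dim π_λ) s_λ` expands the same element as `Σ_μ (Σ_λ (dim π_λ) c_{λ,n₀}^μ) s_μ`.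
The two coordinate vectors agree because the Schur functions of degree `n` are linearly
independent: the bialternant formula sends `s_μ` to the alternant `a_{μ+δ}`, the only one of
these alternants containing the monomial `x^{μ+δ}`.
-/

namespace Equiv.Perm

variable {α : Type*} [Fintype α] [DecidableEq α]

theorem IsCycle.eq_orderOf_of_mem_cycleType_pow {C : Perm α} (hC : C.IsCycle) {m b : ℕ}
    (hb : b ∈ (C ^ m).cycleType) : b = orderOf (C ^ m) := by
  refine Nat.dvd_antisymm (dvd_of_mem_cycleType hb) (orderOf_dvd_of_pow_eq_one ?_)
  rw [cycleType_def, Multiset.mem_map] at hb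
  obtain ⟨c, hc, rfl⟩ := hb
  obtain ⟨x, hx⟩ := (mem_cycleFactorsFinset_iff.mp hc).1.nonempty_support
  have hfix : ((C ^ m) ^ c.support.card) x = x := by
    rw [← cycleOf_pow_apply_self, ← cycle_is_cycleOf hx hc,
      ← (mem_cycleFactorsFinset_iff.mp hc).1.orderOf, pow_orderOf_eq_one, one_apply]
  have hxC : x ∈ C.support := support_pow_le C m (mem_cycleFactorsFinset_support_le hc hx)
  rw [Function.comp_apply, ← pow_mul]
  exact (hC.pow_eq_one_iff' (mem_support.mp hxC)).mpr (by rwa [pow_mul])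

theorem IsCycle.cycleType_pow {C : Perm α} (hC : C.IsCycle) {m : ℕ}
    (hm : ¬ C.support.card ∣ m) :
    (C ^ m).cycleType = Multiset.replicate (Nat.gcd C.support.card m)
      (C.support.card / Nat.gcd C.support.card m) := by
  have hrep : (C ^ m).cycleType =
      Multiset.replicate (Multiset.card (C ^ m).cycleType) (orderOf (C ^ m)) :=
    Multiset.eq_replicate_card.mpr fun b hb => hC.eq_orderOf_of_mem_cycleType_pow hb
  have hsum := sum_cycleType (C ^ m)
  rw [hC.support_pow_eq_iff.mpr (hC.orderOf ▸ hm), hrep, Multiset.sum_replicate, smul_eq_mul,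
    orderOf_pow, hC.orderOf] at hsum
  rw [hrep, orderOf_pow, hC.orderOf]
  congr
  have hpos : 0 < C.support.card := by linarith [hC.two_le_card_support]
  refine Nat.eq_of_mul_eq_mul_right (Nat.div_pos (Nat.gcd_le_left m hpos)
    (Nat.gcd_pos_of_pos_left m hpos)) ?_
  rw [hsum, Nat.mul_div_cancel' (Nat.gcd_dvd_left _ _)]

end Equiv.Perm

theorem cycleTypePoly_one (N : ℕ) : cycleTypePoly N 1 = psymNC 1 ^ N := by
  simp [cycleTypePoly]

theorem cycleTypePoly_of_cycleType_eq_replicate {N k ℓ : ℕ} {σ : Equiv.Perm (Fin N)}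
    (hσ : σ.cycleType = Multiset.replicate k ℓ) (hN : k * ℓ = N) :
    cycleTypePoly N σ = psymNC ℓ ^ k := by
  simp [cycleTypePoly, hσ, hN]

theorem cycleTypePoly_pow_of_cycleType_eq_singleton {n : ℕ} {C : Equiv.Perm (Fin n)}
    (hC : C.cycleType = {n}) (m : ℕ) :
    cycleTypePoly n (C ^ m) = psymNC (n / n.gcd m) ^ n.gcd m := by
  have hcycle : C.IsCycle := Equiv.Perm.card_cycleType_eq_one.mp (by simp [hC])
  have hsupport : C.support.card = n := by simp [← Equiv.Perm.sum_cycleType, hC]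
  by_cases hdvd : n ∣ m
  · have hn : 0 < n := hsupport ▸ (by linarith [hcycle.two_le_card_support])
    rw [orderOf_dvd_iff_pow_eq_one.mp (by rwa [hcycle.orderOf, hsupport]), cycleTypePoly_one,
      Nat.gcd_eq_left hdvd, Nat.div_self hn]
  · refine cycleTypePoly_of_cycleType_eq_replicate ?_ (Nat.mul_div_cancel' (Nat.gcd_dvd_left n m))
    rw [hcycle.cycleType_pow (by rwa [hsupport]), hsupport]

theorem adamsC_psymNC (p : ℕ+) (k : ℕ) : adamsC p (psymNC k) = psymNC (p * k) := by
  rcases Nat.eq_zero_or_pos k with rfl | hk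
  · simp [psymNC]
  · rw [psymNC, dif_pos hk, psymNC, dif_pos (Nat.mul_pos p.pos hk)]
    exact aeval_X _ (⟨k, hk⟩ : ℕ+)

theorem partsOf_antitone {d : ℕ} (lam : d.Partition) : Antitone (partsOf lam) := by
  intro i j hij
  simp only [partsOf]
  rcases lt_or_ge j (lam.parts.sort (· ≥ ·)).length with hj | hj
  · rw [List.getD_eq_getElem _ _ hj, List.getD_eq_getElem _ _ (hij.trans_lt hj)]
    exact (Multiset.pairwise_sort _ _).rel_get_of_le (a := ⟨i, hij.trans_lt hj⟩) (b := ⟨j, hj⟩) hij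
  · rw [List.getD_eq_default _ _ hj]
    exact Nat.zero_le _

theorem partsOf_eq_zero_of_le {d j : ℕ} (lam : d.Partition) (hj : d ≤ j) :
    partsOf lam j = 0 := by
  refine List.getD_eq_default _ _ (le_trans ?_ hj)
  rw [Multiset.length_sort]
  calc Multiset.card lam.parts ≤ lam.parts.sum := by
        simpa using Multiset.card_nsmul_le_sum fun x hx => lam.parts_pos hx
    _ = d := lam.parts_sum

theorem List.eq_of_getD_zero_eq {L L' : List ℕ} (hL : ∀ a ∈ L, 0 < a) (hL' : ∀ a ∈ L', 0 < a)
    (h : ∀ j, L.getD j 0 = L'.getD j 0) : L = L' := by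
  refine List.ext_getElem? fun j => ?_
  have hj := h j
  simp only [List.getD_eq_getElem?_getD] at hj
  rcases hx : L[j]? with _ | a <;> rcases hy : L'[j]? with _ | b <;>
    simp only [hx, hy, Option.getD_none, Option.getD_some] at hj
  · rfl
  · exact absurd hj (hL' b (List.mem_of_getElem? hy)).ne
  · exact absurd hj (hL a (List.mem_of_getElem? hx)).ne'
  · rw [hj]

theorem partsOf_injective (d : ℕ) : Function.Injective (partsOf (d := d)) := by
  intro lam ν h
  have hpos : ∀ μ : d.Partition, ∀ a ∈ μ.parts.sort (· ≥ ·), 0 < a :=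
    fun μ a ha => μ.parts_pos ((Multiset.mem_sort _).mp ha)
  have hsort := List.eq_of_getD_zero_eq (hpos lam) (hpos ν) (congrFun h)
  exact Nat.Partition.ext (by rw [← Multiset.sort_eq lam.parts (· ≥ ·), hsort, Multiset.sort_eq])

theorem Equiv.Perm.eq_one_of_strictAnti_comp {α β : Type*} [LinearOrder α] [Finite α]
    [Preorder β] {f g : α → β} (hf : StrictAnti f) (hg : StrictAnti g) {w : Equiv.Perm α}
    (h : ∀ i, g (w i) = f i) : w = 1 := by
  have hw : StrictMono w := fun i j hij => hg.lt_iff_gt.mp (by rw [h, h]; exact hf hij)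
  exact Equiv.ext fun i => hw.apply_eq

/-- The exponent `ν + δ`, `δ = (N - 1, …, 1, 0)`, of the diagonal term of `alternantC N ν`. -/
noncomputable def alternantExponent (N : ℕ) (ν : ℕ → ℕ) : Fin N →₀ ℕ :=
  Finsupp.equivFunOnFinite.symm fun r => ν r + (N - 1 - r)

theorem alternantExponent_strictAnti {N : ℕ} {ν : ℕ → ℕ} (hν : Antitone ν) :
    StrictAnti (alternantExponent N ν) := by
  intro a b hab
  have hνab := hν (Fin.le_iff_val_le_val.mp hab.le)
  have hb := b.isLt
  have hab' : (a : ℕ) < b := hab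
  simp only [alternantExponent, Finsupp.coe_equivFunOnFinite_symm]
  omega

theorem alternantC_eq_sum (N : ℕ) (ν : ℕ → ℕ) :
    alternantC N ν = ∑ w : Equiv.Perm (Fin N),
      C ((Equiv.Perm.sign w : ℤ) : ℂ) *
        monomial (Finsupp.mapDomain w (alternantExponent N ν)) 1 := by
  rw [alternantC, Matrix.det_apply']
  refine Finset.sum_congr rfl fun w _ => ?_
  rw [← rename_monomial, monomial_eq, Finsupp.prod_fintype _ _ (by simp)]
  simp [alternantExponent]

theorem coeff_alternantC {N : ℕ} {ν τ : ℕ → ℕ} (hν : Antitone ν) (hτ : Antitone τ) :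
    coeff (alternantExponent N τ) (alternantC N ν) =
      if alternantExponent N ν = alternantExponent N τ then 1 else 0 := by
  rw [alternantC_eq_sum, coeff_sum, Finset.sum_eq_single 1]
  · simp
  · intro w _ hw
    rw [coeff_C_mul, coeff_monomial, if_neg, mul_zero]
    intro h
    refine hw (Equiv.Perm.eq_one_of_strictAnti_comp (alternantExponent_strictAnti hν)
      (alternantExponent_strictAnti hτ) fun i => ?_)
    rw [← h, Finsupp.mapDomain_apply w.injective]
  · simp

theorem linearIndependent_alternantC {ι : Type*} {N : ℕ} {ν : ι → ℕ → ℕ}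
    (hν : ∀ i, Antitone (ν i)) (hinj : Function.Injective fun i => alternantExponent N (ν i)) :
    LinearIndependent ℂ fun i => alternantC N (ν i) := by
  refine .of_pairwise_dual_eq_zero_one _ (fun i => lcoeff ℂ (alternantExponent N (ν i)))
    (fun i j hij => ?_) fun i => ?_
  · simp only [lcoeff_apply, coeff_alternantC (hν j) (hν i), if_neg fun h => hij (hinj h).symm]
  · simp only [lcoeff_apply, coeff_alternantC (hν i) (hν i), if_true]

theorem alternantExponent_partsOf_injective (n : ℕ) :
    Function.Injective fun μ : n.Partition => alternantExponent n (partsOf μ) := by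
  intro μ ν h
  refine partsOf_injective n (funext fun j => ?_)
  rcases lt_or_ge j n with hj | hj
  · have := DFunLike.congr_fun h ⟨j, hj⟩
    simpa [alternantExponent] using this
  · rw [partsOf_eq_zero_of_le μ hj, partsOf_eq_zero_of_le ν hj]

theorem IsSchurFamilyC.linearIndependent {s : (ℕ → ℕ) → SymmFnC} (hs : IsSchurFamilyC s)
    (n : ℕ) : LinearIndependent ℂ fun μ : n.Partition => s (partsOf μ) := by
  refine .of_comp ((LinearMap.mulRight ℂ (alternantC n fun _ => 0)) ∘ₗ (pEvalC n).toLinearMap) ?_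
  have hbialt : ∀ μ : n.Partition, pEvalC n (s (partsOf μ)) * alternantC n (fun _ => 0) =
      alternantC n (partsOf μ) :=
    fun μ => hs _ _ (partsOf_antitone μ) fun j hj => partsOf_eq_zero_of_le μ hj
  simpa [Function.comp_def, hbialt] using
    linearIndependent_alternantC partsOf_antitone (alternantExponent_partsOf_injective n)

theorem stmt12_general (m n d n0 : ℕ) (hn : 0 < n)
    (hd : d = Nat.gcd m n) (hn0pos : 0 < n0) (hn0 : n = n0 * d)
    (s : (ℕ → ℕ) → SymmFnC) (hs : IsSchurFamilyC s)
    (V : n.Partition → Type) [∀ μ, AddCommGroup (V μ)] [∀ μ, Module ℂ (V μ)]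
    [∀ μ, FiniteDimensional ℂ (V μ)]
    (π : ∀ μ, Representation ℂ (Equiv.Perm (Fin n)) (V μ))
    (hfrob : ∀ σ : Equiv.Perm (Fin n),
      cycleTypePoly n σ
        = ∑ μ : n.Partition, (LinearMap.trace ℂ (V μ) (π μ σ)) • s (partsOf μ))
    (D : d.Partition → ℕ)
    (hD : psymNC 1 ^ d = ∑ lam : d.Partition, (D lam : ℂ) • s (partsOf lam))
    (c : d.Partition → n.Partition → ℂ)
    (hc : ∀ lam : d.Partition,
      adamsC ⟨n0, hn0pos⟩ (s (partsOf lam)) = ∑ μ : n.Partition, c lam μ • s (partsOf μ))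
    (C : Equiv.Perm (Fin n)) (hC : C.cycleType = {n})
    (μ : n.Partition) :
    LinearMap.trace ℂ (V μ) (π μ (C ^ m))
      = ∑ lam : d.Partition, (D lam : ℂ) * c lam μ := by
  have hd_pos : 0 < d := Nat.pos_of_mul_pos_left (hn0 ▸ hn)
  have hgcd : n.gcd m = d := by rw [Nat.gcd_comm, hd]
  have hcycle : cycleTypePoly n (C ^ m) = adamsC ⟨n0, hn0pos⟩ (psymNC 1 ^ d) := by
    rw [cycleTypePoly_pow_of_cycleType_eq_singleton hC, hgcd, hn0, Nat.mul_div_cancel _ hd_pos,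
      map_pow, adamsC_psymNC ⟨n0, hn0pos⟩ 1, PNat.mk_coe, mul_one]
  have hexpand : adamsC ⟨n0, hn0pos⟩ (psymNC 1 ^ d) =
      ∑ ν : n.Partition, (∑ lam : d.Partition, (D lam : ℂ) * c lam ν) • s (partsOf ν) := by
    simp only [hD, map_sum, map_smul, hc, Finset.smul_sum, smul_smul, Finset.sum_smul]
    exact Finset.sum_comm
  exact (hs.linearIndependent n).eq_coords_of_eq ((hfrob _).symm.trans (hcycle.trans hexpand)) μ

/-- Let `C` be an `n`-cycle in `S_n`, `d = gcd(m,n)` and `n₀ = n/d`.  For any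
partition `μ` of `n`, `Tr_{π_μ}(C^m) = Σ_{|λ|=d} (dim π_λ) c_{λ,n₀}^μ`, where the
`π_μ` (characterized by the Frobenius character formula), the dimensions `dim π_λ`
(characterized by `p_1^d = Σ_λ (dim π_λ) s_λ`), and the coefficients `c_{λ,n₀}^μ`
(defined by `Ψ_{n₀}(s_λ) = Σ_μ c_{λ,n₀}^μ s_μ`) are as indicated. -/
theorem stmt12 (m n d n0 : ℕ) (hm : 0 < m) (hn : 0 < n)
    (hd : d = Nat.gcd m n) (hn0pos : 0 < n0) (hn0 : n = n0 * d)
    (s : (ℕ → ℕ) → SymmFnC) (hs : IsSchurFamilyC s)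
    (V : n.Partition → Type) [∀ μ, AddCommGroup (V μ)] [∀ μ, Module ℂ (V μ)]
    [∀ μ, FiniteDimensional ℂ (V μ)]
    (π : ∀ μ, Representation ℂ (Equiv.Perm (Fin n)) (V μ))
    (hfrob : ∀ σ : Equiv.Perm (Fin n),
      cycleTypePoly n σ
        = ∑ μ : n.Partition, (LinearMap.trace ℂ (V μ) (π μ σ)) • s (partsOf μ))
    (D : d.Partition → ℕ)
    (hD : psymNC 1 ^ d = ∑ lam : d.Partition, (D lam : ℂ) • s (partsOf lam))
    (c : d.Partition → n.Partition → ℂ)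
    (hc : ∀ lam : d.Partition,
      adamsC ⟨n0, hn0pos⟩ (s (partsOf lam)) = ∑ μ : n.Partition, c lam μ • s (partsOf μ))
    (C : Equiv.Perm (Fin n)) (hC : C.cycleType = {n})
    (μ : n.Partition) :
    LinearMap.trace ℂ (V μ) (π μ (C ^ m))
      = ∑ lam : d.Partition, (D lam : ℂ) * c lam μ :=
  stmt12_general m n d n0 hn hd hn0pos hn0 s hs V π hfrob D hD c hc C hC μ
end

section
/- Consider the polynomial ring ℂ[p_2,…,p_n, p̃_2,…,p̃_m] and the elements E_i := m·p_i − n·p̃_i for 2 ≤ i ≤ m+n−1, where p_i (resp. p̃_i) denote the power sums in variables x_1,…,x_n (resp. x̃_1,…,x̃_m), expressed as polynomials in the generators via Newton's identities. Let H_2 and H̃_2 be the Calogero-Moser operators whose action on power sums satisfies H_2(p_i) = (1+c) i(i−1) p_{i−2} − i c Σ_{s=0}^{i−2} p_s p_{i−2−s} with c = m/n for H_2 and c = n/m for H̃_2. Then for H := n H_2 + m H̃_2 one has (1/(mn)) H(E_i) = ((m+n)/(mn)) i(i−1) E_{i−2} − (i/(mn)) Σ_{s=0}^{i−2} ( m p_{i−2−s}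 E_s + n p̃_s E_{i−2−s} ), so in particular H(E_i) lies in the ideal generated by E_j with j < i. -/
open MvPolynomial

/-- The polynomial ring `ℚ[p_2,…, p̃_2,…]` in the two families of power sums
(we allow all indices `≥ 2`; the statement only uses `p_i` for `2 ≤ i ≤ m+n-1`). -/
abbrev Amn : Type := MvPolynomial (ℕ ⊕ ℕ) ℚ

/-- The power sums `p_i` in the variables `x_1,…,x_n`, as elements of `Amn`, with the
conventions `p_0 = n`, `p_1 = 0`. -/
noncomputable def Pgen (n : ℕ) : ℕ → Amn := fun i =>
  if i = 0 then (n : Amn) else if i = 1 then 0 else X (Sum.inl i)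

/-- The power sums `p̃_i` in the variables `x̃_1,…,x̃_m`, with `p̃_0 = m`, `p̃_1 = 0`. -/
noncomputable def Ptgen (m : ℕ) : ℕ → Amn := fun i =>
  if i = 0 then (m : Amn) else if i = 1 then 0 else X (Sum.inr i)

/-!
Since `H₂` kills the `p̃_i` and `H̃₂` kills the `p_i`, we have
`H(E_i) = mn (H₂(p_i) - H̃₂(p̃_i))`. Expanding `E_{i-2}` and the products `p_{i-2-s} E_s`,
`p̃_s E_{i-2-s}` on the right-hand side, the mixed terms `mn p_{i-2-s} p̃_s` cancel in pairs,
and what is left matches the two Calogero–Moser formulas coefficient by coefficient.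
Every `E_j` on the right has `j < i`.
-/

open Finset

section CalogeroMoser

variable {K A : Type*} [Field K] [CommRing A] [Algebra K A]

/-- The image of the power sum `P i` under the Calogero–Moser operator with coupling `c`. -/
def calogeroMoserImage (c : K) (P : ℕ → A) (i : ℕ) : A :=
  ((1 + c) * i * (i - 1)) • P (i - 2) - (i * c) • ∑ s ∈ range (i - 1), P s * P (i - 2 - s)

lemma sum_smul_mul_add_smul_mul_eq (a b : K) (P Q E : ℕ → A)
    (hE : ∀ s, E s = a • P s - b • Q s) (S : Finset ℕ) (k : ℕ) :
    ∑ s ∈ S, (a • (P (k - s) * E s) + b • (Q s * E (k - s)))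
      = (a * a) • ∑ s ∈ S, P s * P (k - s) - (b * b) • ∑ s ∈ S, Q s * Q (k - s) := by
  rw [smul_sum, smul_sum, ← sum_sub_distrib]
  refine sum_congr rfl fun s _ => ?_
  simp only [hE, Algebra.smul_def, map_mul]
  ring

lemma calogeroMoserImage_sub_calogeroMoserImage {a b : K} (ha : a ≠ 0) (hb : b ≠ 0)
    (P Q E : ℕ → A) (hE : ∀ s, E s = a • P s - b • Q s) (i : ℕ) :
    calogeroMoserImage (a / b) P i - calogeroMoserImage (b / a) Q i
      = ((a + b) / (a * b) * i * (i - 1)) • E (i - 2)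
        - (i / (a * b)) •
          ∑ s ∈ range (i - 1), (a • (P (i - 2 - s) * E s) + b • (Q s * E (i - 2 - s))) := by
  rw [sum_smul_mul_add_smul_mul_eq a b P Q E hE, hE, calogeroMoserImage, calogeroMoserImage]
  match_scalars <;> field_simp
  ring

lemma smul_sub_smul_sum_mem_span (a b c d : K) (P Q E : ℕ → A) {i : ℕ} (hi : 0 < i) :
    c • E (i - 2)
        - d • ∑ s ∈ range (i - 1), (a • (P (i - 2 - s) * E s) + b • (Q s * E (i - 2 - s)))
      ∈ Ideal.span (E '' {j | j < i}) := by
  have hE : ∀ j < i, E j ∈ Ideal.span (E '' {j | j < i}) :=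
    fun j hj => Ideal.subset_span ⟨j, hj, rfl⟩
  refine Submodule.sub_mem _ (Submodule.smul_of_tower_mem _ _ (hE _ (by omega)))
    (Submodule.smul_of_tower_mem _ _ (Ideal.sum_mem _ fun s hs => ?_))
  have hs : s < i - 1 := mem_range.mp hs
  exact Ideal.add_mem _ (Submodule.smul_of_tower_mem _ _ (Ideal.mul_mem_left _ _ (hE s (by omega))))
    (Submodule.smul_of_tower_mem _ _ (Ideal.mul_mem_left _ _ (hE _ (by omega))))

end CalogeroMoser

lemma LinearMap.add_apply_smul_sub_smul {K M N : Type*} [CommRing K] [AddCommGroup M]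
    [AddCommGroup N] [Module K M] [Module K N] (f g : M →ₗ[K] N) (a b : K) {p q : M}
    (hfq : f q = 0) (hgp : g p = 0) :
    (b • f + a • g) (a • p - b • q) = (b * a) • (f p - g q) := by
  simp only [add_apply, smul_apply, map_sub, map_smul, hfq, hgp, smul_zero]
  module

theorem stmt15_general (m n : ℕ) (hm : 0 < m) (hn : 0 < n)
    (H2 Ht2 : Amn →ₗ[ℚ] Amn)
    (hH2p : ∀ i, 2 ≤ i → H2 (Pgen n i)
      = ((1 + (m : ℚ) / (n : ℚ)) * (i : ℚ) * ((i : ℚ) - 1)) • Pgen n (i - 2)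
        - ((i : ℚ) * ((m : ℚ) / (n : ℚ))) •
            ∑ s ∈ Finset.range (i - 1), Pgen n s * Pgen n (i - 2 - s))
    (hH2t : ∀ i, 2 ≤ i → H2 (Ptgen m i) = 0)
    (hHt2p : ∀ i, 2 ≤ i → Ht2 (Pgen n i) = 0)
    (hHt2t : ∀ i, 2 ≤ i → Ht2 (Ptgen m i)
      = ((1 + (n : ℚ) / (m : ℚ)) * (i : ℚ) * ((i : ℚ) - 1)) • Ptgen m (i - 2)
        - ((i : ℚ) * ((n : ℚ) / (m : ℚ))) •
            ∑ s ∈ Finset.range (i - 1), Ptgen m s * Ptgen m (i - 2 - s))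
    (E : ℕ → Amn) (hE : ∀ i, E i = (m : ℚ) • Pgen n i - (n : ℚ) • Ptgen m i)
    (H : Amn →ₗ[ℚ] Amn) (hH : H = (n : ℚ) • H2 + (m : ℚ) • Ht2)
    (i : ℕ) (h2i : 2 ≤ i) :
    ((1 : ℚ) / ((m : ℚ) * (n : ℚ))) • H (E i)
      = (((m : ℚ) + (n : ℚ)) / ((m : ℚ) * (n : ℚ)) * (i : ℚ) * ((i : ℚ) - 1)) • E (i - 2)
        - ((i : ℚ) / ((m : ℚ) * (n : ℚ))) •
            ∑ s ∈ Finset.range (i - 1),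
              ((m : ℚ) • (Pgen n (i - 2 - s) * E s) + (n : ℚ) • (Ptgen m s * E (i - 2 - s)))
    ∧ H (E i) ∈ Ideal.span (E '' {j | j < i}) := by
  have hmn : (m : ℚ) * n ≠ 0 := mul_ne_zero (by positivity) (by positivity)
  have hHE : H (E i) = ((m : ℚ) * n) • (calogeroMoserImage ((m : ℚ) / n) (Pgen n) i
      - calogeroMoserImage ((n : ℚ) / m) (Ptgen m) i) := by
    rw [hH, hE, LinearMap.add_apply_smul_sub_smul _ _ _ _ (hH2t i h2i) (hHt2p i h2i),
      hH2p i h2i, hHt2t i h2i, mul_comm]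
    rfl
  rw [hHE, calogeroMoserImage_sub_calogeroMoserImage (by positivity) (by positivity) _ _ E hE,
    smul_smul, one_div_mul_cancel hmn, one_smul]
  exact ⟨rfl,
    Submodule.smul_of_tower_mem _ _ (smul_sub_smul_sum_mem_span _ _ _ _ _ _ E (by omega))⟩

/-- Let `E_i = m p_i - n p̃_i` and let `H₂`, `H̃₂` be the Calogero-Moser operators,
acting on the generators by
`H₂(p_i) = (1+c) i(i-1) p_{i-2} - i c Σ_{s=0}^{i-2} p_s p_{i-2-s}` with `c = m/n`
(and `H₂(p̃_i) = 0`), and symmetrically for `H̃₂` with `c = n/m`.  Then for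
`H = n H₂ + m H̃₂` and `2 ≤ i ≤ m+n-1`:
`(1/mn) H(E_i) = ((m+n)/mn) i(i-1) E_{i-2}
   - (i/mn) Σ_{s=0}^{i-2} (m p_{i-2-s} E_s + n p̃_s E_{i-2-s})`,
so in particular `H(E_i)` lies in the ideal generated by the `E_j` with `j < i`. -/
theorem stmt15 (m n : ℕ) (hm : 0 < m) (hn : 0 < n)
    (H2 Ht2 : Amn →ₗ[ℚ] Amn)
    (hH2p : ∀ i, 2 ≤ i → H2 (Pgen n i)
      = ((1 + (m : ℚ) / (n : ℚ)) * (i : ℚ) * ((i : ℚ) - 1)) • Pgen n (i - 2)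
        - ((i : ℚ) * ((m : ℚ) / (n : ℚ))) •
            ∑ s ∈ Finset.range (i - 1), Pgen n s * Pgen n (i - 2 - s))
    (hH2t : ∀ i, 2 ≤ i → H2 (Ptgen m i) = 0)
    (hHt2p : ∀ i, 2 ≤ i → Ht2 (Pgen n i) = 0)
    (hHt2t : ∀ i, 2 ≤ i → Ht2 (Ptgen m i)
      = ((1 + (n : ℚ) / (m : ℚ)) * (i : ℚ) * ((i : ℚ) - 1)) • Ptgen m (i - 2)
        - ((i : ℚ) * ((n : ℚ) / (m : ℚ))) •
            ∑ s ∈ Finset.range (i - 1), Ptgen m s * Ptgen m (i - 2 - s))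
    (E : ℕ → Amn) (hE : ∀ i, E i = (m : ℚ) • Pgen n i - (n : ℚ) • Ptgen m i)
    (H : Amn →ₗ[ℚ] Amn) (hH : H = (n : ℚ) • H2 + (m : ℚ) • Ht2)
    (i : ℕ) (h2i : 2 ≤ i) (hile : i ≤ m + n - 1) :
    ((1 : ℚ) / ((m : ℚ) * (n : ℚ))) • H (E i)
      = (((m : ℚ) + (n : ℚ)) / ((m : ℚ) * (n : ℚ)) * (i : ℚ) * ((i : ℚ) - 1)) • E (i - 2)
        - ((i : ℚ) / ((m : ℚ) * (n : ℚ))) •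
            ∑ s ∈ Finset.range (i - 1),
              ((m : ℚ) • (Pgen n (i - 2 - s) * E s) + (n : ℚ) • (Ptgen m s * E (i - 2 - s)))
    ∧ H (E i) ∈ Ideal.span (E '' {j | j < i}) :=
  stmt15_general m n hm hn H2 Ht2 hH2p hH2t hHt2p hHt2t E hE H hH i h2i
end
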